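/- arXiv:1706.05920 — 3 statements merged into one kernel-verified Lean document; each statement's English description precedes it below -/
import Mathlib

section
/- Let E/F be a finite tamely ramified Galois extension of nonarchimedean local fields. Then the subgroup C_E of E^× is stable under the action of the Galois group Gal(E/F): for every σ ∈ Gal(E/F) one has σ(C_E) = C_E. -/
noncomputable section

/-- The value group `ℤₘ₀ = WithZero (Multiplicative ℤ)` of a discretely valued field. -/
abbrev Zm0 : Type := WithZero (Multiplicative ℤ)

/-- The normalized additive valuation `ν_K` attached to a `ℤₘ₀`-valued field:
`ν_K x = n` when `Valued.v x = ofAdd (-n)`, and `ν_K 0 = 0` by convention. -/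
def nval (K : Type*) [Field K] [Valued K Zm0] (x : K) : ℤ :=
  if h : (Valued.v x : Zm0) = 0 then 0 else - Multiplicative.toAdd (WithZero.unzero h)

/-- The ring of integers `o_K` of a `ℤₘ₀`-valued field. -/
abbrev ringOfIntegers (K : Type*) [Field K] [Valued K Zm0] : ValuationSubring K :=
  (Valued.v : Valuation K Zm0).valuationSubring

/-- The residue field `k_K`. -/
abbrev residueField (K : Type*) [Field K] [Valued K Zm0] : Type _ :=
  IsLocalRing.ResidueField (ringOfIntegers K)

/-- `K` is a nonarchimedean local field: complete with respect to its (normalized)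
discrete valuation, with finite residue field. -/
class IsNALocalField (K : Type*) [Field K] [Valued K Zm0] : Prop where
  complete : CompleteSpace K
  surj : Function.Surjective (Valued.v : K → Zm0)
  finiteResidueField : Finite (residueField K)

/-- `π` is a uniformizer of `K`, i.e. `ν_K π = 1`. -/
def IsUniformizer (K : Type*) [Field K] [Valued K Zm0] (π : K) : Prop :=
  nval K π = 1

/-- `z` is a root of unity of order prime to `p`. -/
def IsRootOfUnityPrimeTo (p : ℕ) {K : Type*} [Field K] (z : K) : Prop :=
  ∃ n : ℕ, 0 < n ∧ Nat.Coprime n p ∧ z ^ n = 1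

/-- The subgroup `C_E` of `E^×` generated by a chosen uniformizer `π_E` and the
group `μ_{q-1}` of `(q-1)`-st roots of unity in `E`, where `q = #k_E`. -/
def CGroup (E : Type*) [Field E] [Valued E Zm0] (πE : Eˣ) : Subgroup Eˣ :=
  Subgroup.closure ({πE} ∪ {u : Eˣ | u ^ (Nat.card (residueField E) - 1) = 1})

/-! Applying `σ` to `π_E ^ e * z = π_F` shows `σ π_E = ζ π_E` with `ζ ^ e = z / σ z`, so `ζ` is
a root of unity of order prime to `p`, while `σ` obviously permutes `μ_{q-1}`. A root of unity `u`
of order `n` prime to `p` lies in `μ_{q-1}`: `w = u ^ (q - 1)` reduces to `1` in `k_E`, and then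
`(1 + w + ⋯ + w ^ (n - 1)) (w - 1) = 0` with the first factor reducing to the unit `n`. -/

open IsLocalRing Finset

section LocalRing

variable {A : Type*} [CommRing A] [IsLocalRing A]

theorem IsLocalRing.eq_one_of_pow_eq_one_of_residue_eq_one {a : A} {n : ℕ} (ha : a ^ n = 1)
    (hres : residue A a = 1) (hn : (n : ResidueField A) ≠ 0) : a = 1 := by
  have hunit : IsUnit (∑ i ∈ range n, a ^ i) := by
    rw [← residue_ne_zero_iff_isUnit]
    simpa [map_sum, hres] using hn
  have hmul : (∑ i ∈ range n, a ^ i) * (a - 1) = 0 := by rw [geom_sum_mul, ha, sub_self]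
  exact sub_eq_zero.mp (hunit.mul_right_eq_zero.mp hmul)

theorem IsLocalRing.pow_card_residueField_sub_one_eq_one [Finite (ResidueField A)] {a : A}
    {n : ℕ} (ha : a ^ n = 1) (hn : (n : ResidueField A) ≠ 0) :
    a ^ (Nat.card (ResidueField A) - 1) = 1 := by
  have : Fintype (ResidueField A) := Fintype.ofFinite _
  have hres : residue A a ≠ 0 := by
    rintro h
    have hn0 : n ≠ 0 := by rintro rfl; simp at hn
    simpa [h, zero_pow hn0] using congr(residue A $ha)
  refine eq_one_of_pow_eq_one_of_residue_eq_one (n := n) ?_ ?_ hn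
  · rw [← pow_mul, mul_comm, pow_mul, ha, one_pow]
  · rw [map_pow, Nat.card_eq_fintype_card, FiniteField.pow_card_sub_one_eq_one _ hres]

end LocalRing

theorem natCast_ne_zero_of_coprime {R : Type*} [CommRing R] [Nontrivial R] {n p : ℕ}
    (hp : (p : R) = 0) (hnp : n.Coprime p) : (n : R) ≠ 0 :=
  (isCoprime_zero_right.mp (hp ▸ hnp.cast)).ne_zero

namespace Valuation

variable {K Γ₀ : Type*} [Field K] [LinearOrderedCommGroupWithZero Γ₀] (v : Valuation K Γ₀)

theorem natCast_residueField_eq_zero_iff (n : ℕ) :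
    (n : ResidueField v.valuationSubring) = 0 ↔ v n < 1 := by
  rw [← map_natCast (residue v.valuationSubring), residue_eq_zero_iff,
    mem_maximalIdeal_iff]
  rfl

theorem pow_card_residueField_sub_one_eq_one [Finite (ResidueField v.valuationSubring)]
    {u : K} {n : ℕ} (hu : u ^ n = 1) (hn : (n : ResidueField v.valuationSubring) ≠ 0) :
    u ^ (Nat.card (ResidueField v.valuationSubring) - 1) = 1 := by
  have hn0 : n ≠ 0 := by rintro rfl; simp at hn
  have hvu : v u = 1 := (pow_left_inj hn0).mp (by rw [← map_pow, hu, map_one, one_pow])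
  have hpow : (⟨u, hvu.le⟩ : v.valuationSubring) ^ n = 1 := Subtype.ext (by simpa using hu)
  simpa using congr(($(IsLocalRing.pow_card_residueField_sub_one_eq_one hpow hn) : K))

end Valuation

theorem nval_of_valuation_eq_coe {K : Type*} [Field K] [Valued K Zm0] {x : K}
    {g : Multiplicative ℤ} (hx : Valued.v x = g) : nval K x = -g.toAdd := by
  simp [nval, hx]

theorem nval_pos_iff {K : Type*} [Field K] [Valued K Zm0] {x : K} (hx : x ≠ 0) :
    0 < nval K x ↔ Valued.v x < 1 := by
  obtain ⟨g, hg⟩ := WithZero.ne_zero_iff_exists.mp (Valued.v.ne_zero_iff.mpr hx)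
  rw [nval_of_valuation_eq_coe hg.symm, ← hg, WithZero.coe_lt_one, ← Multiplicative.toAdd_lt,
    toAdd_one, Left.neg_pos_iff]

theorem valuation_algebraMap_lt_one {F E : Type*} [Field F] [Valued F Zm0] [Field E]
    [Valued E Zm0] [Algebra F E] {e : ℕ} (he : 0 < e)
    (hcomp : ∀ x : F, nval E (algebraMap F E x) = e * nval F x) {x : F}
    (hx : Valued.v x < 1) : Valued.v (algebraMap F E x) < 1 := by
  rcases eq_or_ne x 0 with rfl | hx0
  · simp
  rw [← nval_pos_iff ((map_ne_zero (algebraMap F E)).mpr hx0), hcomp]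
  exact mul_pos (by exact_mod_cast he) ((nval_pos_iff hx0).mpr hx)

theorem natCast_residueField_eq_zero_of_charP {F E : Type*} [Field F] [Valued F Zm0] [Field E]
    [Valued E Zm0] [Algebra F E] {e : ℕ} (he : 0 < e)
    (hcomp : ∀ x : F, nval E (algebraMap F E x) = e * nval F x) {p : ℕ}
    (hchar : CharP (residueField F) p) : (p : residueField E) = 0 := by
  have hpF := (Valued.v.natCast_residueField_eq_zero_iff p).mp
    (CharP.cast_eq_zero (residueField F) p)
  exact (Valued.v.natCast_residueField_eq_zero_iff p).mpr
    (by simpa using valuation_algebraMap_lt_one he hcomp hpF)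

theorem AlgEquiv.div_pow_eq_one_of_pow_mul_eq_algebraMap {F E : Type*} [Field F] [Field E]
    [Algebra F E] (τ : E ≃ₐ[F] E) {π z : E} {a : F} {e n : ℕ} (hπ : π ≠ 0) (hz : z ^ n = 1)
    (hrel : π ^ e * z = algebraMap F E a) : (τ π / π) ^ (e * n) = 1 := by
  have hτ : τ π ^ e * τ z = π ^ e * z := by
    rw [← map_pow, ← map_mul, hrel, AlgEquiv.commutes]
  have hτz : τ z ^ n = 1 := by rw [← map_pow, hz, map_one]
  calc (τ π / π) ^ (e * n) = ((τ π / π) ^ e * τ z) ^ n := by rw [mul_pow, hτz, mul_one, pow_mul]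
    _ = z ^ n := by
      rw [div_pow, div_mul_eq_mul_div, hτ, mul_div_cancel_left₀ _ (pow_ne_zero e hπ)]
    _ = 1 := hz

theorem CGroup_map_le {E : Type*} [Field E] [Valued E Zm0] {πE : Eˣ} (f : Eˣ →* Eˣ)
    (hf : (f πE / πE) ^ (Nat.card (residueField E) - 1) = 1) :
    (CGroup E πE).map f ≤ CGroup E πE := by
  rw [CGroup, MonoidHom.map_closure, Subgroup.closure_le]
  rintro _ ⟨y, rfl | hy, rfl⟩
  · rw [← div_mul_cancel (f y) y]
    exact mul_mem (Subgroup.subset_closure (Or.inr hf)) (Subgroup.subset_closure (Or.inl rfl))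
  · exact Subgroup.subset_closure (Or.inr (by rw [Set.mem_ofPred_eq, ← map_pow, hy.out, map_one]))

theorem stmt4_general (F E : Type*) [Field F] [Valued F Zm0] [Field E] [Valued E Zm0]
    [Algebra F E]
    (hE : IsNALocalField E)
    (p : ℕ) (hchar : CharP (residueField F) p)
    (e : ℕ) (he : 0 < e)
    (hcomp : ∀ x : F, nval E (algebraMap F E x) = e * nval F x)
    (htame : Nat.Coprime e p)
    (πF : F)
    (πE : Eˣ)
    (z : E) (hz : IsRootOfUnityPrimeTo p z)
    (hrel : (πE : E) ^ e * z = algebraMap F E πF)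
    (σ : E ≃ₐ[F] E) :
    Subgroup.map (Units.map (σ : E →* E)) (CGroup E πE) = CGroup E πE := by
  obtain ⟨n, -, hnp, hzn⟩ := hz
  have := hE.finiteResidueField
  have hp : (p : residueField E) = 0 := natCast_residueField_eq_zero_of_charP he hcomp hchar
  have hle (τ : E ≃ₐ[F] E) : (CGroup E πE).map (Units.map (τ : E →* E)) ≤ CGroup E πE := by
    refine CGroup_map_le _ (Units.ext ?_)
    push_cast
    exact Valued.v.pow_card_residueField_sub_one_eq_one
      (τ.div_pow_eq_one_of_pow_mul_eq_algebraMap πE.ne_zero hzn hrel)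
      (natCast_ne_zero_of_coprime hp (htame.mul_left hnp))
  exact le_antisymm (hle σ) fun x hx =>
    ⟨Units.map (σ.symm : E →* E) x, hle σ.symm ⟨x, hx, rfl⟩, by ext; simp⟩

/-- Let `E/F` be a finite tamely ramified Galois extension of
nonarchimedean local fields. Then `C_E` is stable under `Gal(E/F)`:
`σ (C_E) = C_E` for every `σ ∈ Gal(E/F)`. -/
theorem stmt4 (F E : Type*) [Field F] [Valued F Zm0] [Field E] [Valued E Zm0]
    [Algebra F E] [FiniteDimensional F E] [IsGalois F E]
    (hF : IsNALocalField F) (hE : IsNALocalField E)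
    (p : ℕ) (hp : p.Prime) (hchar : CharP (residueField F) p)
    (e : ℕ) (he : 0 < e)
    (hcomp : ∀ x : F, nval E (algebraMap F E x) = e * nval F x)
    (htame : Nat.Coprime e p)
    (πF : F) (hπF : IsUniformizer F πF)
    (πE : Eˣ) (hπE : IsUniformizer E (πE : E))
    (z : E) (hz : IsRootOfUnityPrimeTo p z)
    (hrel : (πE : E) ^ e * z = algebraMap F E πF)
    (σ : E ≃ₐ[F] E) :
    Subgroup.map (Units.map (σ : E →* E)) (CGroup E πE) = CGroup E πE :=
  stmt4_general F E hE p hchar e he hcomp htame πF πE z hz hrel σ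
end
end

section
/- Let E/F be a finite tamely ramified Galois extension of nonarchimedean local fields. Let σ₁, σ₂ ∈ Gal(E/F) and let s ∈ C_E be such that σ₁(s) ≠ σ₂(s). Then ν_E(σ₁(s) − σ₂(s)) = ν_E(σ₁(s)) = ν_E(s). -/
noncomputable section

lemma zm0_pow_eq_one {a : Zm0} {m : ℕ} (hm : m ≠ 0) (h : a ^ m = 1) : a = 1 := by
  have ha : a ≠ 0 := by
    intro h0
    rw [h0, zero_pow hm] at h
    exact zero_ne_one h
  have hcoe : a = ((WithZero.unzero ha : Multiplicative ℤ) : Zm0) := (WithZero.coe_unzero ha).symm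
  set u := WithZero.unzero ha with hu
  have hu1 : u ^ m = 1 := by
    have : ((u ^ m : Multiplicative ℤ) : Zm0) = ((1 : Multiplicative ℤ) : Zm0) := by
      rw [WithZero.coe_pow, ← hcoe, h, WithZero.coe_one]
    exact_mod_cast this
  have : (m : ℤ) * Multiplicative.toAdd u = 0 := by
    have := congrArg Multiplicative.toAdd hu1
    rwa [toAdd_pow, toAdd_one, nsmul_eq_mul] at this
  have htu : Multiplicative.toAdd u = 0 := by
    rcases mul_eq_zero.mp this with h' | h'
    · exact absurd h' (by exact_mod_cast hm)
    · exact h'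
  rw [hcoe, toAdd_eq_zero.mp htu, WithZero.coe_one]

lemma nval_spec {K : Type*} [Field K] [Valued K Zm0] {x : K} (hx : (Valued.v x : Zm0) ≠ 0) :
    (Valued.v x : Zm0) = ((Multiplicative.ofAdd (-(nval K x)) : Multiplicative ℤ) : Zm0) := by
  unfold nval
  rw [dif_neg hx, neg_neg, ofAdd_toAdd, WithZero.coe_unzero]

lemma zm0_coe_eq_one_iff {a : ℤ} :
    ((Multiplicative.ofAdd a : Multiplicative ℤ) : Zm0) = 1 ↔ a = 0 := by
  rw [← WithZero.coe_one, WithZero.coe_inj, ← ofAdd_zero,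
    Multiplicative.ofAdd.injective.eq_iff]

lemma zm0_coe_lt_one_iff {a : ℤ} :
    ((Multiplicative.ofAdd a : Multiplicative ℤ) : Zm0) < 1 ↔ a < 0 := by
  rw [← WithZero.coe_one, WithZero.coe_lt_coe, ← ofAdd_zero, Multiplicative.ofAdd_lt]

lemma val_sub_one {E : Type*} [Field E] [Valued E Zm0] {ζ : E} {m : ℕ} (hm : 0 < m)
    (hζm : ζ ^ m = 1) (hζ1 : ζ ≠ 1)
    (hvm : (Valued.v ((m : E)) : Zm0) = 1) :
    (Valued.v (ζ - 1) : Zm0) = 1 := by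
  have hvζ : (Valued.v ζ : Zm0) = 1 :=
    zm0_pow_eq_one hm.ne' (by rw [← map_pow, hζm, map_one])
  have hle : (Valued.v (ζ - 1) : Zm0) ≤ 1 := by
    have h := Valuation.map_sub Valued.v ζ 1
    simpa [hvζ] using h
  by_contra hne
  have hlt : (Valued.v (ζ - 1) : Zm0) < 1 := lt_of_le_of_ne hle hne
  have hsub0 : ζ - 1 ≠ 0 := sub_ne_zero.mpr hζ1
  have hS : (∑ i ∈ Finset.range m, ζ ^ i) = 0 := by
    have h1 : (∑ i ∈ Finset.range m, ζ ^ i) * (ζ - 1) = 0 := by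
      rw [geom_sum_mul, hζm, sub_self]
    rcases mul_eq_zero.mp h1 with h' | h'
    · exact h'
    · exact absurd h' hsub0
  have hpow : ∀ k : ℕ, (Valued.v (ζ ^ k - 1) : Zm0) ≤ Valued.v (ζ - 1) := by
    intro k
    rw [← geom_sum_mul, map_mul]
    have h2 : (Valued.v (∑ i ∈ Finset.range k, ζ ^ i) : Zm0) ≤ 1 :=
      Valuation.map_sum_le _ (fun i _ => by rw [map_pow, hvζ, one_pow])
    calc (Valued.v (∑ i ∈ Finset.range k, ζ ^ i) : Zm0) * Valued.v (ζ - 1)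
        ≤ 1 * Valued.v (ζ - 1) := mul_le_mul_left h2 _
      _ = Valued.v (ζ - 1) := one_mul _
  have hSm : (Valued.v ((∑ i ∈ Finset.range m, ζ ^ i) - (m : E)) : Zm0) ≤ Valued.v (ζ - 1) := by
    have heq : (∑ i ∈ Finset.range m, ζ ^ i) - (m : E)
        = ∑ i ∈ Finset.range m, (ζ ^ i - 1) := by
      rw [Finset.sum_sub_distrib, Finset.sum_const, Finset.card_range, nsmul_eq_mul, mul_one]
    rw [heq]
    exact Valuation.map_sum_le _ (fun i _ => hpow i)
  have hfin : (Valued.v (∑ i ∈ Finset.range m, ζ ^ i) : Zm0) = 1 := by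
    have hne2 : (Valued.v ((m : E)) : Zm0)
        ≠ Valued.v ((∑ i ∈ Finset.range m, ζ ^ i) - (m : E)) := by
      rw [hvm]
      exact (lt_of_le_of_lt hSm hlt).ne'
    have h3 := Valuation.map_add_of_distinct_val Valued.v hne2
    rw [add_sub_cancel] at h3
    rw [h3, hvm]
    exact max_eq_left (lt_of_le_of_lt hSm hlt).le
  rw [hS, map_zero] at hfin
  exact zero_ne_one hfin

lemma valuationIntegers (K : Type*) [Field K] [Valued K Zm0] :
    (Valued.v : Valuation K Zm0).Integers (ringOfIntegers K) :=
  ⟨Subtype.coe_injective, fun x => x.2, fun r hr => ⟨⟨r, hr⟩, rfl⟩⟩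

/-- Let `E/F` be a finite tamely ramified Galois extension of
nonarchimedean local fields, `σ₁, σ₂ ∈ Gal(E/F)` and `s ∈ C_E` with `σ₁ s ≠ σ₂ s`.
Then `ν_E (σ₁ s - σ₂ s) = ν_E (σ₁ s) = ν_E s` (stated via the multiplicative
valuation `v`). -/
theorem stmt5 (F E : Type*) [Field F] [Valued F Zm0] [Field E] [Valued E Zm0]
    [Algebra F E] [FiniteDimensional F E] [IsGalois F E]
    (hF : IsNALocalField F) (hE : IsNALocalField E)
    (p : ℕ) (hp : p.Prime) (hchar : CharP (residueField F) p)
    (e : ℕ) (he : 0 < e)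
    (hcomp : ∀ x : F, nval E (algebraMap F E x) = e * nval F x)
    (htame : Nat.Coprime e p)
    (πF : F) (hπF : IsUniformizer F πF)
    (πE : Eˣ) (hπE : IsUniformizer E (πE : E))
    (z : E) (hz : IsRootOfUnityPrimeTo p z)
    (hrel : (πE : E) ^ e * z = algebraMap F E πF)
    (σ₁ σ₂ : E ≃ₐ[F] E) (s : Eˣ) (hs : s ∈ CGroup E πE)
    (hne : σ₁ (s : E) ≠ σ₂ (s : E)) :
    Valued.v (σ₁ (s : E) - σ₂ (s : E)) = Valued.v (σ₁ (s : E)) ∧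
    Valued.v (σ₁ (s : E)) = Valued.v (s : E) := by
  classical
  have halg : Function.Injective (algebraMap F E) := (algebraMap F E).injective
  have hIF := valuationIntegers F
  have hIE := valuationIntegers E
  -- naturals coprime to p are units in F
  have hMF : ∀ m : ℕ, ¬ p ∣ m → (Valued.v ((m : F)) : Zm0) = 1 := by
    intro m hm
    have hres : ((m : residueField F)) ≠ 0 := by
      rw [Ne, CharP.cast_eq_zero_iff (residueField F) p]
      exact hm
    have hunit : IsUnit ((m : ℕ) : ringOfIntegers F) := by
      by_contra hcon
      have hmem : ((m : ℕ) : ringOfIntegers F) ∈ IsLocalRing.maximalIdeal (ringOfIntegers F) :=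
        (IsLocalRing.mem_maximalIdeal _).mpr hcon
      have h0 : (IsLocalRing.residue (ringOfIntegers F)) ((m : ℕ) : ringOfIntegers F) = 0 :=
        (IsLocalRing.residue_eq_zero_iff _).mpr hmem
      rw [map_natCast] at h0
      exact hres h0
    have h1 := hIF.isUnit_iff_valuation_eq_one.mp hunit
    rwa [map_natCast] at h1
  -- naturals coprime to p are units in E
  have hME : ∀ m : ℕ, ¬ p ∣ m → (Valued.v ((m : E)) : Zm0) = 1 := by
    intro m hm
    have h1 := hMF m hm
    have hF0 : (m : F) ≠ 0 := by
      intro h0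
      rw [h0, map_zero] at h1
      exact zero_ne_one h1
    have hvneF : (Valued.v ((m : F)) : Zm0) ≠ 0 := (Valuation.ne_zero_iff _).mpr hF0
    have hnF : nval F ((m : F)) = 0 := by
      have h2 := (nval_spec hvneF).symm.trans h1
      have h3 := zm0_coe_eq_one_iff.mp h2
      omega
    have hE0 : algebraMap F E ((m : F)) ≠ 0 := fun h0 => hF0 (halg (by rw [h0, map_zero]))
    have hvneE : (Valued.v (algebraMap F E ((m : F))) : Zm0) ≠ 0 :=
      (Valuation.ne_zero_iff _).mpr hE0
    have hnE : nval E (algebraMap F E ((m : F))) = 0 := by rw [hcomp, hnF, mul_zero]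
    have h4 := nval_spec hvneE
    rw [hnE, neg_zero, ofAdd_zero, WithZero.coe_one] at h4
    rwa [map_natCast] at h4
  -- char of residue field of E is p
  haveI hfinE : Finite (residueField E) := hE.finiteResidueField
  have hpE0 : ((p : residueField E)) = 0 := by
    have hple : (Valued.v ((p : E)) : Zm0) < 1 := by
      by_cases h0 : ((p : F)) = 0
      · have hE0 : ((p : E)) = 0 := by
          rw [← map_natCast (algebraMap F E) p, h0, map_zero]
        rw [hE0, map_zero]
        exact zero_lt_one
      · have hle1 : (Valued.v ((p : F)) : Zm0) ≤ 1 := by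
          have hmem : ((p : F)) ∈ ringOfIntegers F := natCast_mem (ringOfIntegers F) p
          exact hmem
        have hne1 : (Valued.v ((p : F)) : Zm0) ≠ 1 := by
          intro h1
          have hu : IsUnit ((p : ℕ) : ringOfIntegers F) :=
            hIF.isUnit_iff_valuation_eq_one.mpr (by rwa [map_natCast])
          have h2 := hu.map (IsLocalRing.residue (ringOfIntegers F))
          rw [map_natCast, CharP.cast_eq_zero (residueField F) p] at h2
          exact h2.ne_zero rfl
        have hlt : (Valued.v ((p : F)) : Zm0) < 1 := lt_of_le_of_ne hle1 hne1
        have hvneF : (Valued.v ((p : F)) : Zm0) ≠ 0 := (Valuation.ne_zero_iff _).mpr h0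
        have hnpos : 0 < nval F ((p : F)) := by
          have h2 := nval_spec hvneF
          rw [h2] at hlt
          have := zm0_coe_lt_one_iff.mp hlt
          omega
        have hE0 : algebraMap F E ((p : F)) ≠ 0 := fun hh => h0 (halg (by rw [hh, map_zero]))
        have hvneE : (Valued.v (algebraMap F E ((p : F))) : Zm0) ≠ 0 :=
          (Valuation.ne_zero_iff _).mpr hE0
        have h4 := nval_spec hvneE
        rw [← map_natCast (algebraMap F E) p]
        rw [h4, hcomp]
        apply zm0_coe_lt_one_iff.mpr
        have : 0 < (e : ℤ) * nval F ((p : F)) := by positivity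
        omega
    have hnotunit : ¬ IsUnit ((p : ℕ) : ringOfIntegers E) := by
      intro hu
      have h1 := hIE.isUnit_iff_valuation_eq_one.mp hu
      rw [map_natCast] at h1
      rw [h1] at hple
      exact lt_irrefl _ hple
    have hmem : ((p : ℕ) : ringOfIntegers E) ∈ IsLocalRing.maximalIdeal (ringOfIntegers E) :=
      (IsLocalRing.mem_maximalIdeal _).mpr hnotunit
    have h0 := (IsLocalRing.residue_eq_zero_iff _).mpr hmem
    rwa [map_natCast] at h0
  haveI hcharE : CharP (residueField E) p := by
    have hc := ringChar.charP (residueField E)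
    have hdvd : ringChar (residueField E) ∣ p :=
      (CharP.cast_eq_zero_iff _ (ringChar _) p).mp hpE0
    rcases (Nat.dvd_prime hp).mp hdvd with h1 | h1
    · exact absurd h1 CharP.ringChar_ne_one
    · rwa [h1] at hc
  -- q = p ^ f
  haveI : Fintype (residueField E) := Fintype.ofFinite _
  obtain ⟨f, -, hcard⟩ := FiniteField.card (residueField E) p
  have hqcard : Nat.card (residueField E) = p ^ (f : ℕ) := by
    rw [Nat.card_eq_fintype_card, hcard]
  have hq2 : 2 ≤ Nat.card (residueField E) := by
    rw [hqcard]
    calc 2 ≤ p := hp.two_le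
      _ ≤ p ^ (f : ℕ) := Nat.le_self_pow f.pos.ne' p
  have hq1pos : 0 < Nat.card (residueField E) - 1 := by omega
  have hq1 : ¬ p ∣ (Nat.card (residueField E) - 1) := by
    intro hd
    have hdq : p ∣ Nat.card (residueField E) := by
      rw [hqcard]; exact dvd_pow_self p f.pos.ne'
    have h1 : p ∣ 1 := by
      have h2 := Nat.dvd_sub hdq hd
      rwa [Nat.sub_sub_self (by omega)] at h2
    exact hp.one_lt.ne' (Nat.dvd_one.mp h1)
  -- tameness data
  obtain ⟨n, hn0, hncop, hzn⟩ := hz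
  have hpe : ¬ p ∣ e := by
    intro hd
    have : p ∣ 1 := htame ▸ Nat.dvd_gcd hd dvd_rfl
    exact hp.one_lt.ne' (Nat.dvd_one.mp this)
  have hpn : ¬ p ∣ n := by
    intro hd
    have : p ∣ 1 := hncop ▸ Nat.dvd_gcd hd dvd_rfl
    exact hp.one_lt.ne' (Nat.dvd_one.mp this)
  -- key induction
  have key : ∀ t : Eˣ, t ∈ CGroup E πE → ∀ σ τ : E ≃ₐ[F] E,
      ∃ m : ℕ, 0 < m ∧ ¬ p ∣ m ∧ (σ (t : E) * (τ (t : E))⁻¹) ^ m = 1 := by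
    intro t ht
    have ht' : t ∈ Subgroup.closure
        ({πE} ∪ {u : Eˣ | u ^ (Nat.card (residueField E) - 1) = 1}) := ht
    refine Subgroup.closure_induction (p := fun (g : Eˣ) _ => ∀ σ τ : E ≃ₐ[F] E,
        ∃ m : ℕ, 0 < m ∧ ¬ p ∣ m ∧ (σ (g : E) * (τ (g : E))⁻¹) ^ m = 1) ?_ ?_ ?_ ?_ ht'
    · rintro x (rfl | hx) σ τ
      · -- x = πE
        refine ⟨e * n, Nat.mul_pos he hn0, ?_, ?_⟩
        · intro hd
          rcases (Nat.Prime.dvd_mul hp).mp hd with h | h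
          exacts [hpe h, hpn h]
        · have hz0 : z ≠ 0 := by
            intro h0
            rw [h0, zero_pow hn0.ne'] at hzn
            exact zero_ne_one hzn
          have hσz : σ z ≠ 0 := fun h0 => hz0 (σ.injective (by rw [h0, map_zero]))
          have hτπ : τ ((x : E)) ≠ 0 :=
            fun h0 => (Units.ne_zero x) (τ.injective (by rw [h0, map_zero]))
          have hEq : σ ((x : E)) ^ e * σ z = τ ((x : E)) ^ e * τ z := by
            rw [← map_pow, ← map_mul, ← map_pow, ← map_mul, hrel, σ.commutes, τ.commutes]
          have h1 : (σ ((x : E)) * (τ ((x : E)))⁻¹) ^ e = τ z * (σ z)⁻¹ := by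
            rw [mul_pow, inv_pow]
            field_simp
            linear_combination hEq
          rw [pow_mul, h1, mul_pow, inv_pow, ← map_pow, ← map_pow, hzn, map_one, map_one,
            inv_one, mul_one]
      · -- root of unity case
        refine ⟨Nat.card (residueField E) - 1, hq1pos, hq1, ?_⟩
        have hxE : (x : E) ^ (Nat.card (residueField E) - 1) = 1 := by
          have := congrArg (Units.val) hx
          rwa [Units.val_pow_eq_pow_val, Units.val_one] at this
        rw [mul_pow, inv_pow, ← map_pow, ← map_pow, hxE, map_one, map_one, inv_one, mul_one]
    · intro σ τ
      exact ⟨1, one_pos, fun h => hp.one_lt.ne' (Nat.dvd_one.mp h), by simp⟩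
    · intro x y hx hy ihx ihy σ τ
      obtain ⟨m₁, hm₁, hp₁, he₁⟩ := ihx σ τ
      obtain ⟨m₂, hm₂, hp₂, he₂⟩ := ihy σ τ
      refine ⟨m₁ * m₂, Nat.mul_pos hm₁ hm₂, ?_, ?_⟩
      · intro hd
        rcases (Nat.Prime.dvd_mul hp).mp hd with h | h
        exacts [hp₁ h, hp₂ h]
      · have hxy : ((x * y : Eˣ) : E) = (x : E) * (y : E) := rfl
        rw [hxy, map_mul, map_mul, mul_inv]
        have hre : σ (x : E) * σ (y : E) * ((τ (x : E))⁻¹ * (τ (y : E))⁻¹)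
            = (σ (x : E) * (τ (x : E))⁻¹) * (σ (y : E) * (τ (y : E))⁻¹) := by ring
        rw [hre, mul_pow, pow_mul, he₁, one_pow, one_mul, mul_comm m₁ m₂, pow_mul, he₂, one_pow]
    · intro x hx ihx σ τ
      obtain ⟨m, hm, hpm, hee⟩ := ihx σ τ
      refine ⟨m, hm, hpm, ?_⟩
      have hxinv : ((x⁻¹ : Eˣ) : E) = ((x : E))⁻¹ := Units.val_inv_eq_inv_val x
      rw [hxinv, map_inv₀, map_inv₀, inv_inv]
      have hre : (σ (x : E))⁻¹ * τ (x : E) = (σ (x : E) * (τ (x : E))⁻¹)⁻¹ := by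
        rw [mul_inv_rev, inv_inv, mul_comm]
      rw [hre, inv_pow, hee, inv_one]
  -- assemble
  have hs0 : (s : E) ≠ 0 := Units.ne_zero s
  have ha0 : σ₁ (s : E) ≠ 0 := fun h0 => hs0 (σ₁.injective (by rw [h0, map_zero]))
  have hb0 : σ₂ (s : E) ≠ 0 := fun h0 => hs0 (σ₂.injective (by rw [h0, map_zero]))
  have hvs0 : (Valued.v ((s : E)) : Zm0) ≠ 0 := (Valuation.ne_zero_iff _).mpr hs0
  have hval : ∀ σ : E ≃ₐ[F] E, (Valued.v (σ (s : E)) : Zm0) = Valued.v ((s : E)) := by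
    intro σ
    obtain ⟨m', hm'0, -, hm'⟩ := key s hs σ (AlgEquiv.refl)
    have hrefl : (AlgEquiv.refl : E ≃ₐ[F] E) ((s : E)) = (s : E) := rfl
    rw [hrefl] at hm'
    have hw : (Valued.v (σ (s : E) * ((s : E))⁻¹) : Zm0) = 1 :=
      zm0_pow_eq_one hm'0.ne' (by rw [← map_pow, hm', map_one])
    rw [map_mul, map_inv₀] at hw
    exact (mul_inv_eq_one₀ hvs0).mp hw
  have hva := hval σ₁
  have hvb := hval σ₂
  obtain ⟨m, hm0, hmp, hζm⟩ := key s hs σ₁ σ₂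
  have hζ1 : σ₁ (s : E) * (σ₂ (s : E))⁻¹ ≠ 1 := by
    intro h1
    exact hne ((mul_inv_eq_one₀ hb0).mp h1)
  have hvm := hME m hmp
  have hkey := val_sub_one hm0 hζm hζ1 hvm
  have hfactor : σ₁ (s : E) - σ₂ (s : E)
      = σ₂ (s : E) * (σ₁ (s : E) * (σ₂ (s : E))⁻¹ - 1) := by
    field_simp
  constructor
  · rw [hfactor, map_mul, hkey, mul_one, hva, hvb]
  · rw [hva]
end
end

section
/- Let E/F be a finite tamely ramified extension of nonarchimedean local fields and let β ∈ E^× be minimal over F; set ν = ν_E(β) and e = e(E/F). Then π_F^{−ν} · sr(β)^e is a root of unity of order prime to p and the subfield F(π_F^{−ν} · sr(β)^e) of E equals the subfield E' generated over F by all roots of unity in E of order prime to p (the maximal unramified subextension of E/F); in particular E' ⊆ F[sr(β)]. -/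
noncomputable section

/-- The subfield of `E` generated over `F` by all roots of unity in `E` of order prime
to `p` (the maximal unramified subextension of `E/F`). -/
def unramifiedSubfield (F E : Type*) [Field F] [Field E] [Algebra F E] (p : ℕ) :
    Subfield E :=
  Subfield.closure (Set.range (algebraMap F E) ∪ {z : E | IsRootOfUnityPrimeTo p z})

/-- `β` is minimal over `F`: `F[β] = E`, `gcd(ν_E β, e(E/F)) = 1`, and the image of
`π_F ^ (-ν_E β) * β ^ e` in the residue field `k_E` generates `k_E` over `k_F`. -/
def IsMinimal (F E : Type*) [Field F] [Valued F Zm0] [Field E] [Valued E Zm0]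
    [Algebra F E] (e : ℕ) (πF : F) (ι : residueField F →+* residueField E)
    (β : E) : Prop :=
  Algebra.adjoin F {β} = ⊤ ∧
  Int.gcd (nval E β) e = 1 ∧
  ∃ y : ringOfIntegers E, (y : E) = algebraMap F E (πF ^ (-(nval E β))) * β ^ e ∧
    Subfield.closure (Set.range ι ∪ {IsLocalRing.residue _ y}) = ⊤


/-!
Write `s = π_E ^ a * ζ` with `ζ ^ (q - 1) = 1`. Since `s ≡ β`, the valuations give `a = ν`, and
`π_E ^ e = π_F * z⁻¹` turns `g = π_F ^ (-ν) * s ^ e` into `z ^ (-ν) * ζ ^ e`, a root of unity of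
order prime to `p`; moreover `g ≡ π_F ^ (-ν) * β ^ e`, so the residue of `g` generates `k_E` over
`k_F`. A finite subring of `k_E` is a field, hence the integers of `L = F(g)` meet every residue
class. Every root of unity `w` of order prime to `p` satisfies `w ^ q = w`, and if `t ∈ L` reduces
to `w` then `t ^ (q ^ k) → w`. As a finite-dimensional subspace over the complete field `F`, `L` is
closed in `E`, so `w ∈ L`.
-/

section Nval

variable {K : Type*} [Field K] [Valued K Zm0]

lemma nval_eq_neg_log (x : K) : nval K x = -WithZero.log (Valued.v x) := by
  unfold nval
  split_ifs with h
  · simp [h]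
  · rw [WithZero.toAdd_unzero_eq_log]

lemma valued_v_eq_exp_neg_nval {x : K} (hx : x ≠ 0) :
    Valued.v x = WithZero.exp (-nval K x) := by
  rw [nval_eq_neg_log, neg_neg, WithZero.exp_log ((Valuation.ne_zero_iff _).mpr hx)]

lemma nval_congr {x y : K} (h : Valued.v x = Valued.v y) : nval K x = nval K y := by
  simp only [nval, h]

lemma nval_zpow (x : K) (n : ℤ) : nval K (x ^ n) = n * nval K x := by
  simp [nval_eq_neg_log, WithZero.log_zpow]

end Nval

namespace Valuation

variable {R Γ₀ : Type*} [CommRing R] [LinearOrderedCommGroupWithZero Γ₀] (v : Valuation R Γ₀)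

lemma map_eq_one_of_pow_eq_one {x : R} {n : ℕ} (hn : n ≠ 0) (h : x ^ n = 1) : v x = 1 :=
  (pow_eq_one_iff_of_nonneg zero_le hn).mp (by rw [← map_pow, h, map_one])

lemma map_natCast_le_one (n : ℕ) : v n ≤ 1 :=
  (v.mem_integer_iff _).mp (natCast_mem _ n)

variable {v} {x y : R}

lemma map_pow_sub_pow_le (hx : v x ≤ 1) (hy : v y ≤ 1) (n : ℕ) :
    v (x ^ n - y ^ n) ≤ v (x - y) := by
  rw [← geom_sum₂_mul, map_mul]
  refine mul_le_of_le_one_left' (v.map_sum_le fun i _ => ?_)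
  rw [map_mul, map_pow, map_pow]
  exact mul_le_one' (pow_le_one' hx i) (pow_le_one' hy _)

lemma map_pow_sub_pow_le_max_mul (hx : v x ≤ 1) (hy : v y ≤ 1) (m : ℕ) :
    v (x ^ m - y ^ m) ≤ max (v m) (v (x - y)) * v (x - y) := by
  have hsum : ∑ i ∈ Finset.range m, x ^ i * y ^ (m - 1 - i) =
      ∑ i ∈ Finset.range m, (x ^ i - y ^ i) * y ^ (m - 1 - i) + m * y ^ (m - 1) := by
    rw [← Finset.card_range m, ← nsmul_eq_mul, ← Finset.sum_const, Finset.card_range,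
      ← Finset.sum_add_distrib]
    refine Finset.sum_congr rfl fun i hi => ?_
    rw [sub_mul, ← pow_add, Nat.add_sub_cancel' (by simp at hi; omega)]
    ring
  rw [← geom_sum₂_mul, map_mul, hsum]
  refine mul_le_mul_left (v.map_add_le (v.map_sum_le fun i _ => ?_) ?_) _
  · rw [map_mul, map_pow]
    exact (mul_le_of_le_one_right' (pow_le_one' hy _)).trans
      ((map_pow_sub_pow_le hx hy i).trans (le_max_right _ _))
  · rw [map_mul, map_pow]
    exact (mul_le_of_le_one_right' (pow_le_one' hy _)).trans (le_max_left _ _)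

lemma map_pow_prime_pow_sub_pow_le (hx : v x ≤ 1) (hy : v y ≤ 1) (p m : ℕ) :
    v (x ^ p ^ m - y ^ p ^ m) ≤ max (v p) (v (x - y)) ^ m * v (x - y) := by
  induction m with
  | zero => simp
  | succ k ih =>
    have hxk : v (x ^ p ^ k) ≤ 1 := by rw [map_pow]; exact pow_le_one' hx _
    have hyk : v (y ^ p ^ k) ≤ 1 := by rw [map_pow]; exact pow_le_one' hy _
    have hmax : max (v p) (v (x ^ p ^ k - y ^ p ^ k)) ≤ max (v p) (v (x - y)) :=
      max_le_max le_rfl (map_pow_sub_pow_le hx hy _)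
    calc v (x ^ p ^ (k + 1) - y ^ p ^ (k + 1))
        = v ((x ^ p ^ k) ^ p - (y ^ p ^ k) ^ p) := by rw [← pow_mul, ← pow_mul, pow_succ]
      _ ≤ max (v p) (v (x ^ p ^ k - y ^ p ^ k)) * v (x ^ p ^ k - y ^ p ^ k) :=
        map_pow_sub_pow_le_max_mul hxk hyk p
      _ ≤ max (v p) (v (x - y)) * (max (v p) (v (x - y)) ^ k * v (x - y)) :=
        mul_le_mul' hmax ih
      _ = max (v p) (v (x - y)) ^ (k + 1) * v (x - y) := by rw [pow_succ', mul_assoc]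

lemma map_pow_sub_one_lt_one (h : v (x - 1) < 1) (n : ℕ) : v (x ^ n - 1) < 1 := by
  have hx : v x = 1 := by simpa using v.map_one_add_of_lt h
  simpa using (map_pow_sub_pow_le hx.le v.map_one.le n).trans_lt h

lemma eq_one_of_pow_eq_one_of_map_sub_one_lt_one [IsDomain R] {n : ℕ} (hn : v n = 1)
    {ξ : R} (hξ : ξ ^ n = 1) (h : v (ξ - 1) < 1) : ξ = 1 := by
  by_contra hne
  -- `∑ ξ ^ i` vanishes, yet it is congruent to `n`, a unit.
  have hsum : ∑ i ∈ Finset.range n, ξ ^ i = 0 := by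
    have := mul_geom_sum ξ n
    rw [hξ, sub_self] at this
    exact (mul_eq_zero.mp this).resolve_left (sub_ne_zero.mpr hne)
  have hlt : v (∑ i ∈ Finset.range n, (ξ ^ i - 1)) < 1 :=
    v.map_sum_lt one_ne_zero fun i _ => map_pow_sub_one_lt_one h i
  rw [Finset.sum_sub_distrib, hsum, Finset.sum_const, Finset.card_range, nsmul_one, zero_sub,
    map_neg, hn] at hlt
  exact lt_irrefl _ hlt

end Valuation

namespace IsRootOfUnityPrimeTo

variable {K : Type*} [Field K] {p : ℕ} {x y : K}

lemma mul (hx : IsRootOfUnityPrimeTo p x) (hy : IsRootOfUnityPrimeTo p y) :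
    IsRootOfUnityPrimeTo p (x * y) := by
  obtain ⟨m, hm, hmp, hxm⟩ := hx
  obtain ⟨n, hn, hnp, hyn⟩ := hy
  refine ⟨m * n, Nat.mul_pos hm hn, Nat.Coprime.mul_left hmp hnp, ?_⟩
  rw [mul_pow, pow_mul, hxm, mul_comm m, pow_mul, hyn, one_pow, one_pow, one_mul]

lemma zpow (hx : IsRootOfUnityPrimeTo p x) (k : ℤ) : IsRootOfUnityPrimeTo p (x ^ k) := by
  obtain ⟨n, hn, hnp, hxn⟩ := hx
  refine ⟨n, hn, hnp, ?_⟩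
  rw [← zpow_natCast, ← zpow_mul, mul_comm, zpow_mul, zpow_natCast, hxn, one_zpow]

lemma pow (hx : IsRootOfUnityPrimeTo p x) (k : ℕ) : IsRootOfUnityPrimeTo p (x ^ k) := by
  simpa using hx.zpow k

lemma valuation_eq_one {Γ₀ : Type*} [LinearOrderedCommGroupWithZero Γ₀] (v : Valuation K Γ₀)
    (hx : IsRootOfUnityPrimeTo p x) : v x = 1 :=
  let ⟨_, hn, _, hxn⟩ := hx
  v.map_eq_one_of_pow_eq_one hn.ne' hxn

end IsRootOfUnityPrimeTo

section FiniteField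

variable {k : Type*} [Field k] [Finite k]

lemma FiniteField.coprime_natCard_sub_one {p : ℕ} [CharP k p] (hp : p.Prime) :
    Nat.Coprime (Nat.card k - 1) p := by
  have : Fintype k := Fintype.ofFinite k
  obtain ⟨n, -, hcard⟩ := FiniteField.card k p
  rw [Nat.card_eq_fintype_card, hcard]
  exact Nat.Coprime.coprime_dvd_right (dvd_pow_self p n.ne_zero)
    ((Nat.coprime_self_sub_left (Nat.one_le_pow _ _ hp.pos)).mpr (Nat.coprime_one_left _))

lemma Subring.inv_mem_of_finite (R : Subring k) {x : k} (hx : x ∈ R) : x⁻¹ ∈ R := by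
  rcases eq_or_ne x 0 with rfl | hx0
  · simp
  have : Fintype k := Fintype.ofFinite k
  have hcard := Fintype.one_lt_card (α := k)
  convert R.pow_mem hx (Fintype.card k - 2) using 1
  rw [eq_comm, ← mul_eq_one_iff_eq_inv₀ hx0, ← pow_succ,
    show Fintype.card k - 2 + 1 = Fintype.card k - 1 by omega,
    FiniteField.pow_card_sub_one_eq_one x hx0]

end FiniteField

lemma exists_eq_zpow_mul_of_mem_closure {G : Type*} [CommGroup G] {x s : G} {n : ℕ}
    (hs : s ∈ Subgroup.closure ({x} ∪ {u : G | u ^ n = 1})) :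
    ∃ (a : ℤ) (ζ : G), ζ ^ n = 1 ∧ s = x ^ a * ζ := by
  have htors : Subgroup.closure {u : G | u ^ n = 1} = (powMonoidHom n : G →* G).ker :=
    Subgroup.closure_eq (powMonoidHom n : G →* G).ker
  rw [Subgroup.closure_union, htors, Subgroup.mem_sup] at hs
  obtain ⟨_, hx, ζ, hζ, rfl⟩ := hs
  obtain ⟨a, rfl⟩ := Subgroup.mem_closure_singleton.mp hx
  exact ⟨a, ζ, hζ, rfl⟩

section ResidueField

variable {K : Type*} [Field K] [Valued K Zm0]

lemma residue_eq_zero_iff_valued_v_lt_one {x : ringOfIntegers K} :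
    IsLocalRing.residue _ x = 0 ↔ Valued.v (x : K) < 1 := by
  rw [IsLocalRing.residue_eq_zero_iff, ValuationSubring.valuation_lt_one_iff]
  exact (Valuation.isEquiv_iff_val_lt_one.mp
    (Valuation.isEquiv_valuation_valuationSubring (Valued.v : Valuation K Zm0))).symm

lemma residue_eq_residue_iff_valued_v_sub_lt_one {x y : ringOfIntegers K} :
    IsLocalRing.residue _ x = IsLocalRing.residue _ y ↔ Valued.v ((x : K) - y) < 1 := by
  rw [← sub_eq_zero, ← map_sub, residue_eq_zero_iff_valued_v_lt_one]
  rfl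

lemma valued_v_natCast_lt_one_iff {p : ℕ} [CharP (residueField K) p] (n : ℕ) :
    Valued.v (n : K) < 1 ↔ p ∣ n := by
  rw [← CharP.cast_eq_zero_iff (residueField K) p, ← map_natCast (IsLocalRing.residue _),
    residue_eq_zero_iff_valued_v_lt_one]
  rfl

lemma IsRootOfUnityPrimeTo.pow_natCard_residueField_eq_self [Finite (residueField K)] {p : ℕ}
    [CharP (residueField K) p] (hp : p.Prime) {w : K} (hw : IsRootOfUnityPrimeTo p w) :
    w ^ Nat.card (residueField K) = w := by
  obtain ⟨n, hn, hnp, hwn⟩ := hw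
  have : Fintype (residueField K) := Fintype.ofFinite _
  set q := Nat.card (residueField K) with hq_def
  have hq : 1 ≤ q := Nat.card_pos
  have hvw : Valued.v w = 1 := Valued.v.map_eq_one_of_pow_eq_one hn.ne' hwn
  let wI : ringOfIntegers K := ⟨w, hvw.le⟩
  have hres : IsLocalRing.residue _ (wI ^ (q - 1)) = IsLocalRing.residue _ 1 := by
    rw [map_pow, map_one, hq_def, Nat.card_eq_fintype_card]
    refine FiniteField.pow_card_sub_one_eq_one _ fun h => ?_
    rw [residue_eq_zero_iff_valued_v_lt_one] at h
    exact h.ne hvw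
  have hvn : Valued.v (n : K) = 1 :=
    le_antisymm (Valued.v.map_natCast_le_one n) (not_lt.mp fun h =>
      hp.one_lt.ne' (Nat.Coprime.eq_one_of_dvd hnp.symm ((valued_v_natCast_lt_one_iff n).mp h)))
  have hwq : w ^ (q - 1) = 1 := by
    refine Valuation.eq_one_of_pow_eq_one_of_map_sub_one_lt_one hvn ?_
      (residue_eq_residue_iff_valued_v_sub_lt_one.mp hres)
    rw [← pow_mul, mul_comm, pow_mul, hwn, one_pow]
  rw [← Nat.sub_add_cancel hq, pow_succ, hwq, one_mul]

end ResidueField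

namespace Valued

open Filter Topology WithZeroTopology

variable {Γ₀ : Type*} [LinearOrderedCommGroupWithZero Γ₀]

lemma tendsto_nhds_zero_of_forall_lt {R α : Type*} [Ring R] [Valued R Γ₀] {l : Filter α}
    {f : α → R} (h : ∀ r : Γ₀, r ≠ 0 → ∀ᶠ a in l, v (f a) < r) : Tendsto f l (𝓝 0) := by
  refine (hasBasis_nhds_zero R Γ₀).tendsto_right_iff.mpr fun γ _ => ?_
  filter_upwards [h _ (Units.map (MonoidWithZeroHom.ValueGroup₀.embedding
    (f := .ofClass (v : Valuation R Γ₀))) γ).ne_zero] with a ha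
  rwa [Valuation.restrict_lt_iff_lt_embedding]

lemma tendsto_nhds_zero_of_le_pow [MulArchimedean Γ₀] {R : Type*} [Ring R] [Valued R Γ₀]
    {f : ℕ → R} {c : Γ₀} (hc : c < 1) (hf : ∀ n, v (f n) ≤ c ^ n) :
    Tendsto f atTop (𝓝 0) := by
  refine tendsto_nhds_zero_of_forall_lt fun r hr => ?_
  obtain ⟨N, hN⟩ := exists_pow_lt₀ hc (Units.mk0 r hr)
  filter_upwards [eventually_ge_atTop N] with n hn
  exact (hf n).trans_lt ((pow_le_pow_right_of_le_one' hc.le hn).trans_lt hN)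

lemma eventually_nhds_zero_lt {K : Type*} [Field K] [Valued K Γ₀]
    (hsurj : Function.Surjective (v : K → Γ₀)) {r : Γ₀} (hr : r ≠ 0) :
    ∀ᶠ x in 𝓝 (0 : K), v x < r := by
  have := (continuous_valuation_of_surjective hsurj).tendsto 0
  rw [map_zero, WithZeroTopology.tendsto_zero] at this
  exact this r hr

end Valued

open Filter Topology in
lemma tendsto_pow_pow_of_pow_eq_self {R Γ₀ : Type*} [CommRing R]
    [LinearOrderedCommGroupWithZero Γ₀] [MulArchimedean Γ₀] [Valued R Γ₀] {p f : ℕ}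
    (hf : 0 < f) (hp : Valued.v (p : R) < 1) {t w : R} (ht : Valued.v t ≤ 1)
    (hw : Valued.v w ≤ 1) (htw : Valued.v (t - w) < 1) (hwq : w ^ p ^ f = w) :
    Tendsto (fun k => t ^ (p ^ f) ^ k) atTop (𝓝 w) := by
  have hwk (k : ℕ) : w ^ (p ^ f) ^ k = w := by
    induction k with
    | zero => simp
    | succ k ih => rw [pow_succ, pow_mul, ih, hwq]
  have hc : max (Valued.v (p : R)) (Valued.v (t - w)) < 1 := max_lt hp htw
  rw [← tendsto_sub_nhds_zero_iff]
  refine Valued.tendsto_nhds_zero_of_le_pow hc fun k => ?_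
  calc Valued.v (t ^ (p ^ f) ^ k - w)
      = Valued.v (t ^ p ^ (f * k) - w ^ p ^ (f * k)) := by rw [pow_mul, hwk]
    _ ≤ max (Valued.v (p : R)) (Valued.v (t - w)) ^ (f * k) * Valued.v (t - w) :=
      Valuation.map_pow_prime_pow_sub_pow_le ht hw p (f * k)
    _ ≤ max (Valued.v (p : R)) (Valued.v (t - w)) ^ k :=
      (mul_le_of_le_one_right' htw.le).trans
        (pow_le_pow_right_of_le_one' hc.le (Nat.le_mul_of_pos_left k hf))

lemma mem_of_pow_natCard_residueField_eq_self {K : Type*} [Field K] [Valued K Zm0]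
    [Finite (residueField K)] {p : ℕ} [CharP (residueField K) p]
    {S : Type*} [SetLike S K] [SubmonoidClass S K] {A : S} (hA : IsClosed (A : Set K))
    (hres : ∀ c : residueField K, ∃ t : ringOfIntegers K, (t : K) ∈ A ∧
      IsLocalRing.residue _ t = c)
    {w : K} (hw : Valued.v w ≤ 1) (hwq : w ^ Nat.card (residueField K) = w) : w ∈ A := by
  have : Fintype (residueField K) := Fintype.ofFinite _
  obtain ⟨f, -, hcard⟩ := FiniteField.card (residueField K) p
  rw [Nat.card_eq_fintype_card, hcard] at hwq
  obtain ⟨t, htA, htw⟩ := hres (IsLocalRing.residue _ ⟨w, hw⟩)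
  have hp1 : Valued.v (p : K) < 1 := (valued_v_natCast_lt_one_iff p).mpr dvd_rfl
  exact hA.mem_of_tendsto (tendsto_pow_pow_of_pow_eq_self f.pos hp1 t.2 hw
    (residue_eq_residue_iff_valued_v_sub_lt_one.mp htw) hwq)
    (Filter.Eventually.of_forall fun k => pow_mem htA _)

section Extension

variable {F E : Type*} [Field F] [Field E] [Algebra F E]

lemma continuous_algebraMap_of_valued_v_eq_pow {Γ₀ : Type*} [LinearOrderedCommGroupWithZero Γ₀]
    [Valued F Γ₀] [Valued E Γ₀] (hsurj : Function.Surjective (Valued.v : F → Γ₀)) {e : ℕ}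
    (he : e ≠ 0) (hval : ∀ x, Valued.v (algebraMap F E x) = Valued.v x ^ e) :
    Continuous (algebraMap F E) := by
  refine continuous_of_continuousAt_zero (algebraMap F E) ?_
  rw [ContinuousAt, map_zero]
  refine Valued.tendsto_nhds_zero_of_forall_lt fun r hr => ?_
  have hr1 : min r 1 ≠ 0 := (lt_min (zero_lt_iff.mpr hr) zero_lt_one).ne'
  filter_upwards [Valued.eventually_nhds_zero_lt hsurj hr1] with x hx
  rw [hval]
  exact (pow_le_of_le_one zero_le (hx.le.trans (min_le_right _ _)) he).trans_lt
    (hx.trans_le (min_le_left _ _))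

lemma isRootOfUnityPrimeTo_of_mem_cGroup [Valued E Zm0] [Finite (residueField E)] {p : ℕ}
    [CharP (residueField E) p] (hp : p.Prime) {e : ℕ} {πF : F} {πE : Eˣ}
    (hπE : IsUniformizer E (πE : E)) {z : E} (hz : IsRootOfUnityPrimeTo p z)
    (hrel : (πE : E) ^ e * z = algebraMap F E πF) {s : Eˣ} (hsC : s ∈ CGroup E πE) :
    IsRootOfUnityPrimeTo p (algebraMap F E (πF ^ (-nval E (s : E))) * (s : E) ^ e) := by
  obtain ⟨a, ζ, hζ, rfl⟩ := exists_eq_zpow_mul_of_mem_closure hsC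
  have hζ' : IsRootOfUnityPrimeTo p (ζ : E) :=
    ⟨_, Nat.sub_pos_of_lt Finite.one_lt_card, FiniteField.coprime_natCard_sub_one hp,
      by rw [← Units.val_pow_eq_pow_val, hζ, Units.val_one]⟩
  have ha : nval E ((πE ^ a * ζ : Eˣ) : E) = a := by
    rw [Units.val_mul, Units.val_zpow_eq_zpow_val,
      nval_congr (y := (πE : E) ^ a) (by rw [map_mul, hζ'.valuation_eq_one, mul_one]),
      nval_zpow, hπE, mul_one]
  have hπa : ((πE : E) ^ a) ^ e = ((πE : E) ^ e) ^ a := by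
    rw [← zpow_natCast, ← zpow_mul, mul_comm, zpow_mul, zpow_natCast]
  have hg : algebraMap F E (πF ^ (-a)) * ((πE ^ a * ζ : Eˣ) : E) ^ e =
      z ^ (-a) * (ζ : E) ^ e := by
    rw [map_zpow₀, ← hrel, Units.val_mul, Units.val_zpow_eq_zpow_val, mul_pow, hπa, mul_zpow,
      zpow_neg, zpow_neg]
    field_simp
  rw [ha, hg]
  exact (hz.zpow _).mul (hζ'.pow e)

variable [Valued F Zm0] [Valued E Zm0]

lemma valued_v_algebraMap_eq_pow {e : ℕ} (he : e ≠ 0)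
    (hcomp : ∀ x : F, nval E (algebraMap F E x) = e * nval F x) (x : F) :
    Valued.v (algebraMap F E x) = Valued.v x ^ e := by
  rcases eq_or_ne x 0 with rfl | hx
  · simp [zero_pow he]
  rw [valued_v_eq_exp_neg_nval ((map_ne_zero _).mpr hx), valued_v_eq_exp_neg_nval hx, hcomp,
    ← WithZero.exp_nsmul, nsmul_eq_mul, mul_neg]

-- Any base `> 1` would do: only the induced topology on `F` matters.
abbrev rankOneOfSurjective (hsurj : Function.Surjective (Valued.v : F → Zm0)) :
    Valuation.RankOne (Valued.v : Valuation F Zm0) where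
  hom' := (WithZeroMulInt.toNNReal (by norm_num : (2 : NNReal) ≠ 0)).comp
    MonoidWithZeroHom.ValueGroup₀.embedding
  strictMono' := (WithZeroMulInt.toNNReal_strictMono (by norm_num : (1 : NNReal) < 2)).comp
    MonoidWithZeroHom.ValueGroup₀.embedding_strictMono
  exists_val_nontrivial := by
    obtain ⟨x, hx⟩ := hsurj (WithZero.exp (-1 : ℤ))
    exact ⟨x, by simp [hx], by simp [hx]⟩

lemma Submodule.isClosed_of_valued [FiniteDimensional F E] [CompleteSpace F]
    (hsurj : Function.Surjective (Valued.v : F → Zm0)) (hcont : Continuous (algebraMap F E))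
    (M : Submodule F E) : IsClosed (M : Set E) := by
  let := rankOneOfSurjective hsurj
  let : NontriviallyNormedField F := Valued.toNontriviallyNormedField F Zm0
  have : ContinuousSMul F E := ⟨by
    simp_rw [Algebra.smul_def]
    exact (hcont.comp continuous_fst).mul continuous_snd⟩
  exact M.closed_of_finiteDimensional

lemma exists_residue_eq_of_mem_intermediateField [Finite (residueField E)]
    (ι : residueField F →+* residueField E)
    (hι : ∀ (x : ringOfIntegers F) (y : ringOfIntegers E),
      (y : E) = algebraMap F E (x : F) →
        ι (IsLocalRing.residue _ x) = IsLocalRing.residue _ y)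
    (hint : ∀ x : F, Valued.v x ≤ 1 → Valued.v (algebraMap F E x) ≤ 1)
    (K : IntermediateField F E) {g : ringOfIntegers E} (hgK : (g : E) ∈ K)
    (hgen : Subfield.closure (Set.range ι ∪ {IsLocalRing.residue _ g}) = ⊤)
    (c : residueField E) :
    ∃ t : ringOfIntegers E, (t : E) ∈ K ∧ IsLocalRing.residue _ t = c := by
  let R : Subring (residueField E) :=
    (K.toSubalgebra.toSubring.comap (ringOfIntegers E).subtype).map (IsLocalRing.residue _)
  let R' : Subfield (residueField E) := { R with inv_mem' := fun _ => R.inv_mem_of_finite }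
  have hR' : Subfield.closure (Set.range ι ∪ {IsLocalRing.residue _ g}) ≤ R' := by
    refine Subfield.closure_le.mpr ?_
    rintro _ (⟨d, rfl⟩ | rfl)
    · obtain ⟨x, rfl⟩ := IsLocalRing.residue_surjective d
      exact ⟨⟨algebraMap F E x, hint x x.2⟩, K.algebraMap_mem x, (hι x _ rfl).symm⟩
    · exact ⟨g, hgK, rfl⟩
  rw [hgen] at hR'
  obtain ⟨t, ht, htc⟩ := hR' (Subfield.mem_top c)
  exact ⟨t, ht, htc⟩

theorem adjoin_simple_eq_adjoin_setOf_isRootOfUnityPrimeTo [FiniteDimensional F E]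
    [CompleteSpace F] (hsurj : Function.Surjective (Valued.v : F → Zm0)) {e : ℕ} (he : e ≠ 0)
    (hval : ∀ x : F, Valued.v (algebraMap F E x) = Valued.v x ^ e)
    [Finite (residueField E)] {p : ℕ} (hp : p.Prime) [CharP (residueField E) p]
    (ι : residueField F →+* residueField E)
    (hι : ∀ (x : ringOfIntegers F) (y : ringOfIntegers E),
      (y : E) = algebraMap F E (x : F) →
        ι (IsLocalRing.residue _ x) = IsLocalRing.residue _ y)
    {g : ringOfIntegers E} (hg : IsRootOfUnityPrimeTo p (g : E))
    (hgen : Subfield.closure (Set.range ι ∪ {IsLocalRing.residue _ g}) = ⊤) :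
    IntermediateField.adjoin F {(g : E)} =
      IntermediateField.adjoin F {w : E | IsRootOfUnityPrimeTo p w} := by
  refine le_antisymm (IntermediateField.adjoin_simple_le_iff.mpr
    (IntermediateField.subset_adjoin F _ hg)) (IntermediateField.adjoin_le_iff.mpr fun w hw => ?_)
  let K := IntermediateField.adjoin F {(g : E)}
  have hK : IsClosed (K : Set E) := Submodule.isClosed_of_valued hsurj
    (continuous_algebraMap_of_valued_v_eq_pow hsurj he hval) K.toSubalgebra.toSubmodule
  have hint (x : F) (hx : Valued.v x ≤ 1) : Valued.v (algebraMap F E x) ≤ 1 :=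
    (hval x).trans_le (pow_le_one' hx e)
  exact mem_of_pow_natCard_residueField_eq_self hK
    (exists_residue_eq_of_mem_intermediateField ι hι hint K
      (IntermediateField.mem_adjoin_simple_self F _) hgen)
    (hw.valuation_eq_one _).le (hw.pow_natCard_residueField_eq_self hp)

end Extension
theorem stmt11_general (F E : Type*) [Field F] [Valued F Zm0] [Field E] [Valued E Zm0]
    [Algebra F E] [FiniteDimensional F E]
    (hF : IsNALocalField F) (hE : IsNALocalField E)
    (p : ℕ) (hp : p.Prime) (hchar : CharP (residueField F) p)
    (e : ℕ) (he : 0 < e)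
    (hcomp : ∀ x : F, nval E (algebraMap F E x) = e * nval F x)
    (πF : F)
    (πE : Eˣ) (hπE : IsUniformizer E (πE : E))
    (z : E) (hz : IsRootOfUnityPrimeTo p z)
    (hrel : (πE : E) ^ e * z = algebraMap F E πF)
    (ι : residueField F →+* residueField E)
    (hι : ∀ (x : ringOfIntegers F) (y : ringOfIntegers E),
      (y : E) = algebraMap F E (x : F) →
        ι (IsLocalRing.residue _ x) = IsLocalRing.residue _ y)
    (β : Eˣ) (hβ : IsMinimal F E e πF ι (β : E))
    (s : Eˣ) (hsC : s ∈ CGroup E πE)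
    (hsr : Valued.v ((β : E) * ((s : E))⁻¹ - 1) < (1 : Zm0)) :
    IsRootOfUnityPrimeTo p
        (algebraMap F E (πF ^ (-(nval E (β : E)))) * (s : E) ^ e) ∧
    Subfield.closure (Set.range (algebraMap F E) ∪
        {algebraMap F E (πF ^ (-(nval E (β : E)))) * (s : E) ^ e}) =
      unramifiedSubfield F E p ∧
    ∀ x ∈ unramifiedSubfield F E p, x ∈ Algebra.adjoin F {(s : E)} := by
  obtain ⟨-, -, y, hy, hgen⟩ := hβ
  have := hE.finiteResidueField
  have := hF.complete
  have : CharP (residueField E) p := charP_of_injective_ringHom ι.injective p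
  have hsβ : Valued.v (s : E) = Valued.v (β : E) := by
    have := (Valued.v : Valuation E Zm0).map_one_add_of_lt hsr
    rw [add_sub_cancel, map_mul, map_inv₀, mul_inv_eq_one₀ (by simp)] at this
    exact this.symm
  set g := algebraMap F E (πF ^ (-nval E (β : E))) * (s : E) ^ e with hg_def
  have hg : IsRootOfUnityPrimeTo p g := by
    have := isRootOfUnityPrimeTo_of_mem_cGroup hp hπE hz hrel hsC
    rwa [nval_congr hsβ] at this
  have hgy : Valued.v (g - y) < 1 := by
    have hy_eq : (y : E) = g * ((β : E) * (s : E)⁻¹) ^ e := by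
      rw [hy, hg_def, mul_pow, inv_pow]; field_simp
    rw [Valuation.map_sub_swap, hy_eq, ← mul_sub_one, map_mul, hg.valuation_eq_one, one_mul]
    exact Valuation.map_pow_sub_one_lt_one hsr e
  let gI : ringOfIntegers E := ⟨g, (hg.valuation_eq_one Valued.v).le⟩
  have hK := adjoin_simple_eq_adjoin_setOf_isRootOfUnityPrimeTo (g := gI) hF.surj he.ne'
    (valued_v_algebraMap_eq_pow he.ne' hcomp) hp ι hι hg
    (by rwa [residue_eq_residue_iff_valued_v_sub_lt_one.mpr (by exact hgy)])
  refine ⟨hg, congrArg IntermediateField.toSubfield hK, fun x hx => ?_⟩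
  have hgs : IntermediateField.adjoin F {g} ≤ IntermediateField.adjoin F {(s : E)} :=
    IntermediateField.adjoin_simple_le_iff.mpr (mul_mem (IntermediateField.algebraMap_mem _ _)
      (pow_mem (IntermediateField.mem_adjoin_simple_self F _) e))
  rw [← IntermediateField.adjoin_simple_toSubalgebra_of_isAlgebraic
    (Algebra.IsAlgebraic.isAlgebraic _)]
  exact hgs (hK ▸ hx)

/-- Let `E/F` be a finite tamely ramified extension of nonarchimedean
local fields, `β ∈ E^×` minimal over `F`, `ν = ν_E β`, `e = e(E/F)`, and `s = sr β` the
standard representative of `β`. Then `π_F^{-ν} * (sr β)^e` is a root of unity of order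
prime to `p`, the subfield `F(π_F^{-ν} (sr β)^e)` of `E` equals the maximal unramified
subextension `E'` of `E/F`, and in particular `E' ⊆ F[sr β]`. -/
theorem stmt11 (F E : Type*) [Field F] [Valued F Zm0] [Field E] [Valued E Zm0]
    [Algebra F E] [FiniteDimensional F E]
    (hF : IsNALocalField F) (hE : IsNALocalField E)
    (p : ℕ) (hp : p.Prime) (hchar : CharP (residueField F) p)
    (e : ℕ) (he : 0 < e)
    (hcomp : ∀ x : F, nval E (algebraMap F E x) = e * nval F x)
    (htame : Nat.Coprime e p)
    (πF : F) (hπF : IsUniformizer F πF)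
    (πE : Eˣ) (hπE : IsUniformizer E (πE : E))
    (z : E) (hz : IsRootOfUnityPrimeTo p z)
    (hrel : (πE : E) ^ e * z = algebraMap F E πF)
    (ι : residueField F →+* residueField E)
    (hι : ∀ (x : ringOfIntegers F) (y : ringOfIntegers E),
      (y : E) = algebraMap F E (x : F) →
        ι (IsLocalRing.residue _ x) = IsLocalRing.residue _ y)
    (β : Eˣ) (hβ : IsMinimal F E e πF ι (β : E))
    (s : Eˣ) (hsC : s ∈ CGroup E πE)
    (hsr : Valued.v ((β : E) * ((s : E))⁻¹ - 1) < (1 : Zm0)) :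
    IsRootOfUnityPrimeTo p
        (algebraMap F E (πF ^ (-(nval E (β : E)))) * (s : E) ^ e) ∧
    Subfield.closure (Set.range (algebraMap F E) ∪
        {algebraMap F E (πF ^ (-(nval E (β : E)))) * (s : E) ^ e}) =
      unramifiedSubfield F E p ∧
    ∀ x ∈ unramifiedSubfield F E p, x ∈ Algebra.adjoin F {(s : E)} :=
  stmt11_general F E hF hE p hp hchar e he hcomp πF πE hπE z hz hrel ι hι β hβ s hsC hsr
end
end
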